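/- arXiv:2311.14056 — 3 statements merged into one kernel-verified Lean document; each statement's English description precedes it below -/
import Mathlib

section
/- For all real numbers b, all μ > 0, σ > 0, and all real α > 1, one has (Φ((b-μ)/(μσ)))^(α-1) · Φ((b+(α-1)μ)/(μσ)) ≤ (Φ(b/(μσ)))^α, where powers are real powers (well-defined since Φ is strictly positive). -/
open MeasureTheory Real Filter

/-- The standard normal cumulative distribution function
`Φ(x) = (√(2π))⁻¹ ∫_{-∞}^x exp(-t²/2) dt`. -/
noncomputable def stdNormalCDF (x : ℝ) : ℝ :=
  (Real.sqrt (2 * Real.pi))⁻¹ * ∫ t in Set.Iic x, Real.exp (-t ^ 2 / 2)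

/-- The standard normal density `φ(x) = (√(2π))⁻¹ exp(-x²/2)`. -/
noncomputable def stdNormalPDF (x : ℝ) : ℝ :=
  (Real.sqrt (2 * Real.pi))⁻¹ * Real.exp (-x ^ 2 / 2)

/-!
`log Φ` is concave: `(log Φ)'' = -φ (x Φ + φ) / Φ²`, and `x Φ(x) + φ(x) ≥ 0` is the Mills-ratio
bound, which for `x < 0` comes from
`∫_{-∞}^x e^{-t²/2} dt ≤ ∫_{-∞}^x (t / x) e^{-t²/2} dt = -e^{-x²/2} / x`.
Since `b / (μσ)` is the convex combination of `(b - μ) / (μσ)` and `(b + (α - 1) μ) / (μσ)` with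
weights `1 - 1/α` and `1/α`, the inequality is this concavity multiplied by `α` and exponentiated.
-/

open Set Topology

theorem hasDerivAt_integral_Iic {E : Type*} [NormedAddCommGroup E] [NormedSpace ℝ E]
    [CompleteSpace E] {f : ℝ → E} (hf : Continuous f) (hfi : Integrable f) (x : ℝ) :
    HasDerivAt (fun y => ∫ t in Iic y, f t) (f x) x := by
  have hsplit : (fun y => ∫ t in Iic y, f t) =
      fun y => (∫ t in Iic 0, f t) + ∫ t in 0..y, f t := by
    funext y
    rw [← intervalIntegral.integral_Iic_sub_Iic hfi.integrableOn hfi.integrableOn,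
      add_sub_cancel]
  rw [hsplit]
  exact ((hf.integral_hasStrictDerivAt 0 x).hasDerivAt).const_add _

theorem integrable_exp_neg_sq_div_two : Integrable fun t : ℝ => exp (-t ^ 2 / 2) := by
  refine (integrable_exp_neg_mul_sq (b := 2⁻¹) (by norm_num)).congr (ae_of_all _ fun t => ?_)
  ring_nf

theorem integrable_mul_exp_neg_sq_div_two :
    Integrable fun t : ℝ => t * exp (-t ^ 2 / 2) := by
  refine (integrable_mul_exp_neg_mul_sq (b := 2⁻¹) (by norm_num)).congr (ae_of_all _ fun t => ?_)
  ring_nf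

theorem hasDerivAt_exp_neg_sq_div_two (x : ℝ) :
    HasDerivAt (fun t : ℝ => exp (-t ^ 2 / 2)) (-x * exp (-x ^ 2 / 2)) x := by
  have hexponent : HasDerivAt (fun t : ℝ => -t ^ 2 / 2) (-x) x := by
    simpa using ((hasDerivAt_pow 2 x).neg.div_const 2).congr_deriv (by ring)
  simpa only [mul_comm] using hexponent.exp

theorem tendsto_exp_neg_sq_div_two_atBot :
    Tendsto (fun t : ℝ => exp (-t ^ 2 / 2)) atBot (𝓝 0) := by
  have hsq : Tendsto (fun t : ℝ => t ^ 2) atBot atTop := by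
    simpa only [Function.comp_def, even_two.neg_pow] using
      (tendsto_pow_atTop (α := ℝ) two_ne_zero).comp tendsto_neg_atBot_atTop
  refine tendsto_exp_atBot.comp ?_
  simpa only [Function.comp_def, neg_div] using
    tendsto_neg_atTop_atBot.comp (hsq.atTop_div_const two_pos)

theorem integral_Iic_mul_exp_neg_sq_div_two (x : ℝ) :
    ∫ t in Iic x, t * exp (-t ^ 2 / 2) = -exp (-x ^ 2 / 2) := by
  have hderiv (t : ℝ) : HasDerivAt (fun t : ℝ => -exp (-t ^ 2 / 2)) (t * exp (-t ^ 2 / 2)) t :=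
    (hasDerivAt_exp_neg_sq_div_two t).neg.congr_deriv (by ring)
  have hlim := tendsto_exp_neg_sq_div_two_atBot.neg
  rw [neg_zero] at hlim
  rw [integral_Iic_of_hasDerivAt_of_tendsto' (fun t _ => hderiv t)
    integrable_mul_exp_neg_sq_div_two.integrableOn hlim, sub_zero]

theorem neg_mul_integral_Iic_exp_neg_sq_div_two_le {x : ℝ} (hx : x < 0) :
    -x * ∫ t in Iic x, exp (-t ^ 2 / 2) ≤ exp (-x ^ 2 / 2) := by
  have hle : ∫ t in Iic x, exp (-t ^ 2 / 2) ≤ ∫ t in Iic x, x⁻¹ * (t * exp (-t ^ 2 / 2)) := by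
    refine setIntegral_mono_on integrable_exp_neg_sq_div_two.integrableOn
      (integrable_mul_exp_neg_sq_div_two.integrableOn.const_mul _) measurableSet_Iic
      fun t ht => ?_
    have hweight : 1 ≤ x⁻¹ * t := by
      rw [inv_mul_eq_div, one_le_div_of_neg hx]
      exact ht
    rw [← mul_assoc]
    exact le_mul_of_one_le_left (exp_pos _).le hweight
  rw [integral_const_mul, integral_Iic_mul_exp_neg_sq_div_two] at hle
  calc -x * ∫ t in Iic x, exp (-t ^ 2 / 2)
      ≤ -x * (x⁻¹ * -exp (-x ^ 2 / 2)) := mul_le_mul_of_nonneg_left hle (by linarith)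
    _ = exp (-x ^ 2 / 2) := by field_simp [hx.ne]

theorem stdNormalCDF_pos (x : ℝ) : 0 < stdNormalCDF x := by
  refine mul_pos (by positivity) ?_
  rw [setIntegral_pos_iff_support_of_nonneg_ae
    (ae_of_all _ fun t => (exp_pos _).le) integrable_exp_neg_sq_div_two.integrableOn]
  simp [Function.support, exp_ne_zero]

theorem stdNormalPDF_pos (x : ℝ) : 0 < stdNormalPDF x := by
  unfold stdNormalPDF
  positivity

theorem hasDerivAt_stdNormalCDF (x : ℝ) : HasDerivAt stdNormalCDF (stdNormalPDF x) x :=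
  (hasDerivAt_integral_Iic (by fun_prop) integrable_exp_neg_sq_div_two x).const_mul _

theorem hasDerivAt_stdNormalPDF (x : ℝ) : HasDerivAt stdNormalPDF (-x * stdNormalPDF x) x := by
  unfold stdNormalPDF
  exact ((hasDerivAt_exp_neg_sq_div_two x).const_mul _).congr_deriv (by ring)

theorem neg_mul_stdNormalCDF_le_stdNormalPDF (x : ℝ) : -x * stdNormalCDF x ≤ stdNormalPDF x := by
  rcases le_or_gt 0 x with hx | hx
  · nlinarith [stdNormalCDF_pos x, stdNormalPDF_pos x]
  · unfold stdNormalCDF stdNormalPDF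
    rw [mul_left_comm]
    exact mul_le_mul_of_nonneg_left (neg_mul_integral_Iic_exp_neg_sq_div_two_le hx) (by positivity)

theorem concaveOn_log_stdNormalCDF : ConcaveOn ℝ univ fun x => log (stdNormalCDF x) := by
  have hderiv (x : ℝ) : HasDerivAt (fun y => log (stdNormalCDF y))
      (stdNormalPDF x / stdNormalCDF x) x :=
    (hasDerivAt_stdNormalCDF x).log (stdNormalCDF_pos x).ne'
  have hderiv_eq :
      deriv (fun y => log (stdNormalCDF y)) = fun x => stdNormalPDF x / stdNormalCDF x :=
    funext fun x => (hderiv x).deriv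
  have hderiv2 (x : ℝ) : HasDerivAt (fun y => stdNormalPDF y / stdNormalCDF y)
      ((-x * stdNormalPDF x * stdNormalCDF x - stdNormalPDF x * stdNormalPDF x)
        / stdNormalCDF x ^ 2) x :=
    (hasDerivAt_stdNormalPDF x).div (hasDerivAt_stdNormalCDF x) (stdNormalCDF_pos x).ne'
  refine concaveOn_univ_of_deriv2_nonpos (fun x => (hderiv x).differentiableAt) ?_ fun x => ?_
  · rw [hderiv_eq]
    exact fun x => (hderiv2 x).differentiableAt
  · rw [Function.iterate_succ_apply, Function.iterate_one, hderiv_eq, (hderiv2 x).deriv]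
    refine div_nonpos_of_nonpos_of_nonneg ?_ (sq_nonneg _)
    nlinarith [neg_mul_stdNormalCDF_le_stdNormalPDF x, stdNormalPDF_pos x]

theorem rpow_sub_one_mul_le_rpow_of_concaveOn_log {E : Type*} [AddCommGroup E] [Module ℝ E]
    {s : Set E} {f : E → ℝ} (hf : ∀ x ∈ s, 0 < f x) (hlog : ConcaveOn ℝ s fun x => log (f x))
    {x y : E} (hx : x ∈ s) (hy : y ∈ s) {α : ℝ} (hα : 1 ≤ α) :
    f x ^ (α - 1) * f y ≤ f ((1 - α⁻¹) • x + α⁻¹ • y) ^ α := by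
  have hα₀ : 0 < α := by linarith
  have hmem : (1 - α⁻¹) • x + α⁻¹ • y ∈ s :=
    hlog.1 hx hy (sub_nonneg.2 (inv_le_one_of_one_le₀ hα)) (inv_nonneg.2 hα₀.le) (by ring)
  have hconc := hlog.2 hx hy (sub_nonneg.2 (inv_le_one_of_one_le₀ hα)) (inv_nonneg.2 hα₀.le)
    (by ring)
  simp only [smul_eq_mul] at hconc
  rw [← exp_log (hf _ hmem), ← exp_log (hf x hx), ← exp_log (hf y hy), ← exp_mul, ← exp_mul,
    ← exp_add, exp_le_exp]
  calc log (f x) * (α - 1) + log (f y)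
      = α * ((1 - α⁻¹) * log (f x) + α⁻¹ * log (f y)) := by field_simp
    _ ≤ α * log (f ((1 - α⁻¹) • x + α⁻¹ • y)) := mul_le_mul_of_nonneg_left hconc hα₀.le
    _ = log (f ((1 - α⁻¹) • x + α⁻¹ • y)) * α := mul_comm _ _

theorem cdf_inequality_first_general (b μ σ α : ℝ) (hα : 1 < α) :
    stdNormalCDF ((b - μ) / (μ * σ)) ^ (α - 1) *
      stdNormalCDF ((b + (α - 1) * μ) / (μ * σ)) ≤
    stdNormalCDF (b / (μ * σ)) ^ α := by
  have hmix : (1 - α⁻¹) • ((b - μ) / (μ * σ)) + α⁻¹ • ((b + (α - 1) * μ) / (μ * σ)) =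
      b / (μ * σ) := by
    have hα₀ : α ≠ 0 := (zero_lt_one.trans hα).ne'
    simp only [smul_eq_mul, div_eq_mul_inv]
    field_simp
    ring
  rw [← hmix]
  exact rpow_sub_one_mul_le_rpow_of_concaveOn_log (fun x _ => stdNormalCDF_pos x)
    concaveOn_log_stdNormalCDF (mem_univ _) (mem_univ _) hα.le

/-- First inequality of Theorem 4.2:
`Φ((b-μ)/(μσ))^(α-1) · Φ((b+(α-1)μ)/(μσ)) ≤ Φ(b/(μσ))^α` (real powers). -/
theorem cdf_inequality_first (b μ σ α : ℝ) (hμ : 0 < μ) (hσ : 0 < σ) (hα : 1 < α) :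
    stdNormalCDF ((b - μ) / (μ * σ)) ^ (α - 1) *
      stdNormalCDF ((b + (α - 1) * μ) / (μ * σ)) ≤
    stdNormalCDF (b / (μ * σ)) ^ α :=
  cdf_inequality_first_general b μ σ α hα
end

section
/- The function x ↦ ln(Φ(x)) is strictly concave on the whole real line, i.e., for all x₁ ≠ x₂ and all λ with 0 < λ < 1, λ·ln(Φ(x₁)) + (1-λ)·ln(Φ(x₂)) < ln(Φ(λx₁ + (1-λ)x₂)). -/
open MeasureTheory Real Filter

/-!
With `Φ' = φ` and `φ'(x) = -x φ(x)`, one computes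
`(log Φ)'' = -φ (x Φ + φ) / Φ²`, so it suffices that `x Φ(x) + φ(x) > 0`.
Integrating `-t e^{-t²/2} = (e^{-t²/2})'` over `(-∞, x]` gives
`x Φ(x) + φ(x) = (√(2π))⁻¹ ∫_{-∞}^x (x - t) e^{-t²/2} dt`, whose integrand is positive.
-/

open Set Topology

theorem setIntegral_Iic_pos_of_pos {f : ℝ → ℝ} {x : ℝ} (hf : IntegrableOn f (Iic x))
    (hpos : ∀ t < x, 0 < f t) : 0 < ∫ t in Iic x, f t := by
  rw [integral_Iic_eq_integral_Iio, setIntegral_pos_iff_support_of_nonneg_ae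
    ((ae_restrict_iff' measurableSet_Iio).2 (ae_of_all _ fun t ht => (hpos t ht).le))
    (hf.mono_set Iio_subset_Iic_self)]
  have hsupp : Function.support f ∩ Iio x = Iio x :=
    inter_eq_right.2 fun t ht => (hpos t ht).ne'
  simp [hsupp]

theorem integrable_neg_mul_exp_neg_sq_div_two :
    Integrable fun t : ℝ => -t * exp (-t ^ 2 / 2) := by
  simpa only [Pi.neg_def, neg_mul] using integrable_mul_exp_neg_sq_div_two.neg

theorem integral_Iic_neg_mul_exp_neg_sq_div_two (x : ℝ) :
    ∫ t in Iic x, -t * exp (-t ^ 2 / 2) = exp (-x ^ 2 / 2) := by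
  have htendsto : Tendsto (fun t : ℝ => exp (-t ^ 2 / 2)) atBot (𝓝 0) := by
    refine tendsto_exp_atBot.comp (tendsto_atBot_mono' atBot ?_ tendsto_id)
    filter_upwards [Iic_mem_atBot (-2 : ℝ)] with t (ht : t ≤ -2)
    show -t ^ 2 / 2 ≤ t
    nlinarith
  simpa using integral_Iic_of_hasDerivAt_of_tendsto'
    (fun t _ => hasDerivAt_exp_neg_sq_div_two t)
    integrable_neg_mul_exp_neg_sq_div_two.integrableOn htendsto

theorem mul_stdNormalCDF_add_stdNormalPDF_eq (x : ℝ) :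
    x * stdNormalCDF x + stdNormalPDF x =
      (√(2 * π))⁻¹ * ∫ t in Iic x, (x - t) * exp (-t ^ 2 / 2) := by
  simp_rw [sub_eq_add_neg x, add_mul]
  rw [integral_add (integrable_exp_neg_sq_div_two.integrableOn.const_mul x)
    integrable_neg_mul_exp_neg_sq_div_two.integrableOn,
    integral_const_mul, integral_Iic_neg_mul_exp_neg_sq_div_two, stdNormalCDF, stdNormalPDF]
  ring

theorem mul_stdNormalCDF_add_stdNormalPDF_pos (x : ℝ) :
    0 < x * stdNormalCDF x + stdNormalPDF x := by
  have hint : Integrable fun t : ℝ => (x - t) * exp (-t ^ 2 / 2) := by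
    simpa only [Pi.sub_def, sub_mul] using
      (integrable_exp_neg_sq_div_two.const_mul x).sub integrable_mul_exp_neg_sq_div_two
  rw [mul_stdNormalCDF_add_stdNormalPDF_eq]
  exact mul_pos (by positivity)
    (setIntegral_Iic_pos_of_pos hint.integrableOn fun t ht => mul_pos (sub_pos.2 ht) (exp_pos _))

theorem strictConcaveOn_log_stdNormalCDF :
    StrictConcaveOn ℝ univ fun x => log (stdNormalCDF x) := by
  have hlog (x : ℝ) :
      HasDerivAt (fun x => log (stdNormalCDF x)) (stdNormalPDF x / stdNormalCDF x) x :=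
    (hasDerivAt_stdNormalCDF x).log (stdNormalCDF_pos x).ne'
  have hderiv : deriv (fun x => log (stdNormalCDF x)) = fun x => stdNormalPDF x / stdNormalCDF x :=
    funext fun x => (hlog x).deriv
  refine strictConcaveOn_of_deriv2_neg' convex_univ
    (fun x _ => (hlog x).continuousAt.continuousWithinAt) fun x _ => ?_
  have hderiv2 : deriv^[2] (fun x => log (stdNormalCDF x)) x =
      -stdNormalPDF x * (x * stdNormalCDF x + stdNormalPDF x) / stdNormalCDF x ^ 2 := by
    have hquot : HasDerivAt (fun y => stdNormalPDF y / stdNormalCDF y)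
        ((-x * stdNormalPDF x * stdNormalCDF x - stdNormalPDF x * stdNormalPDF x) /
          stdNormalCDF x ^ 2) x :=
      (hasDerivAt_stdNormalPDF x).div (hasDerivAt_stdNormalCDF x) (stdNormalCDF_pos x).ne'
    rw [Function.iterate_succ_apply, Function.iterate_one, hderiv, hquot.deriv]
    ring
  rw [hderiv2]
  exact div_neg_of_neg_of_pos
    (mul_neg_of_neg_of_pos (neg_neg_of_pos (stdNormalPDF_pos x))
      (mul_stdNormalCDF_add_stdNormalPDF_pos x))
    (pow_pos (stdNormalCDF_pos x) 2)

/-- `ln ∘ Φ` is strictly concave on ℝ. -/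
theorem log_stdNormalCDF_strictConcave (x₁ x₂ l : ℝ) (hne : x₁ ≠ x₂)
    (hl0 : 0 < l) (hl1 : l < 1) :
    l * Real.log (stdNormalCDF x₁) + (1 - l) * Real.log (stdNormalCDF x₂) <
      Real.log (stdNormalCDF (l * x₁ + (1 - l) * x₂)) := by
  simpa only [smul_eq_mul] using strictConcaveOn_log_stdNormalCDF.2 (mem_univ x₁)
    (mem_univ x₂) hne hl0 (sub_pos.2 hl1) (add_sub_cancel l 1)
end

section
/- For all real a ≤ b, all μ > 0, σ > 0, and every real α, one has (1/(μσ√(2π))) · ∫_a^b exp((-x² + 2αμx - αμ²)/(2μ²σ²)) dx = exp(α(α-1)/(2σ²)) · (Φ((b-αμ)/(μσ)) - Φ((a-αμ)/(μσ))). -/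
open MeasureTheory Real Filter

lemma stdNormal_integrable : MeasureTheory.Integrable (fun t : ℝ => Real.exp (-t ^ 2 / 2)) := by
  have := integrable_exp_neg_mul_sq (by norm_num : (0:ℝ) < 1/2)
  refine this.congr ?_
  filter_upwards with t
  ring_nf

lemma stdNormalCDF_sub (a b : ℝ) :
    stdNormalCDF b - stdNormalCDF a
      = (Real.sqrt (2 * Real.pi))⁻¹ * ∫ t in a..b, Real.exp (-t ^ 2 / 2) := by
  unfold stdNormalCDF
  rw [← mul_sub, intervalIntegral.integral_Iic_sub_Iic
    stdNormal_integrable.integrableOn stdNormal_integrable.integrableOn]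

/-- Gaussian completing-the-square identity (appendix computation). -/
theorem gaussian_integral_complete_square (a b μ σ α : ℝ) (hab : a ≤ b)
    (hμ : 0 < μ) (hσ : 0 < σ) :
    (1 / (μ * σ * Real.sqrt (2 * Real.pi))) *
        ∫ x in a..b,
          Real.exp ((-x ^ 2 + 2 * α * μ * x - α * μ ^ 2) / (2 * μ ^ 2 * σ ^ 2)) =
      Real.exp (α * (α - 1) / (2 * σ ^ 2)) *
        (stdNormalCDF ((b - α * μ) / (μ * σ)) - stdNormalCDF ((a - α * μ) / (μ * σ))) := by
  have hc : (0:ℝ) < μ * σ := mul_pos hμ hσ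
  have hc' : μ * σ ≠ 0 := ne_of_gt hc
  have hK : ∀ x : ℝ,
      Real.exp ((-x ^ 2 + 2 * α * μ * x - α * μ ^ 2) / (2 * μ ^ 2 * σ ^ 2))
        = Real.exp (α * (α - 1) / (2 * σ ^ 2)) *
            Real.exp (-(x / (μ * σ) - α * μ / (μ * σ)) ^ 2 / 2) := by
    intro x
    rw [← Real.exp_add]
    congr 1
    field_simp
    ring
  rw [intervalIntegral.integral_congr (fun x _ => hK x),
    intervalIntegral.integral_const_mul,
    intervalIntegral.integral_comp_div_sub (fun t => Real.exp (-t ^ 2 / 2)) hc',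
    stdNormalCDF_sub]
  have h1 : a / (μ * σ) - α * μ / (μ * σ) = (a - α * μ) / (μ * σ) := by ring
  have h2 : b / (μ * σ) - α * μ / (μ * σ) = (b - α * μ) / (μ * σ) := by ring
  rw [h1, h2, smul_eq_mul]
  have hs : Real.sqrt (2 * Real.pi) ≠ 0 :=
    ne_of_gt (Real.sqrt_pos.mpr (by positivity))
  field_simp
end
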